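/- arXiv:1910.13374 — 3 statements merged into one kernel-verified Lean document; each statement's English description precedes it below -/
import Mathlib

section
/- Let Δ be a polynomial with integer coefficients such that Δ(1) = 1, let p be a prime number, and let e ≥ 1 be an integer. Then Δ(ζ²) ≠ 0 for every complex number ζ satisfying ζ^(p^e) = 1. (Consequently, for a knot K, the nondegeneracy hypothesis 'Δ_K(ζ²) ≠ 0 for every m-th root of unity ζ' holds automatically whenever m is a prime power, since the Alexander polynomial satisfies Δ_K(1) = 1.) -/
/-- If `Δ` is an integer polynomial with `Δ(1) = 1`, `p` is prime and
`e ≥ 1`, then `Δ(ζ²) ≠ 0` for every complex `ζ` with `ζ^(p^e) = 1`. -/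
theorem alexander_nondegeneracy_prime_power
    (Δ : Polynomial ℤ) (hΔ : Δ.eval 1 = 1)
    (p : ℕ) (hp : p.Prime) (e : ℕ) (he : 1 ≤ e)
    (ζ : ℂ) (hζ : ζ ^ p ^ e = 1) :
    Polynomial.aeval (ζ ^ 2) Δ ≠ 0 := by
  intro h0
  set ξ : ℂ := ζ ^ 2 with hξdef
  have hξ : ξ ^ p ^ e = 1 := by
    rw [hξdef, ← pow_mul, mul_comm, pow_mul, hζ, one_pow]
  have hpe : p ^ e ≠ 0 := pow_ne_zero _ hp.pos.ne'
  haveI := Fact.mk hp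
  have hdvd : orderOf ξ ∣ p ^ e := orderOf_dvd_of_pow_eq_one hξ
  obtain ⟨f, hf, hford⟩ := (Nat.dvd_prime_pow hp).mp hdvd
  rcases Nat.eq_zero_or_pos f with hf0 | hf1
  · -- ξ = 1
    have : ξ = 1 := by
      have := pow_orderOf_eq_one ξ
      rw [hford, hf0, pow_zero, pow_one] at this
      exact this
    rw [this] at h0
    have : ((Δ.eval 1 : ℤ) : ℂ) = 0 := by
      simpa [Polynomial.aeval_def, Polynomial.eval₂_at_one] using h0
    rw [hΔ] at this
    norm_num at this
  · have hprim : IsPrimitiveRoot ξ (p ^ f) := by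
      rw [← hford]; exact IsPrimitiveRoot.orderOf ξ
    have hpos : 0 < p ^ f := pow_pos hp.pos f
    have hcyclo : Polynomial.cyclotomic (p ^ f) ℤ = minpoly ℤ ξ :=
      Polynomial.cyclotomic_eq_minpoly hprim hpos
    have hint : IsIntegral ℤ ξ := hprim.isIntegral hpos
    have hdvdΔ : minpoly ℤ ξ ∣ Δ := minpoly.isIntegrallyClosed_dvd hint h0
    rw [← hcyclo] at hdvdΔ
    have : (Polynomial.cyclotomic (p ^ f) ℤ).eval 1 ∣ Δ.eval 1 := by
      obtain ⟨q, hq⟩ := hdvdΔ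
      exact ⟨q.eval 1, by rw [hq, Polynomial.eval_mul]⟩
    rw [hΔ] at this
    obtain ⟨g, rfl⟩ := Nat.exists_eq_add_of_le hf1
    rw [add_comm, Polynomial.eval_one_cyclotomic_prime_pow] at this
    have h2 := Int.le_of_dvd one_pos this
    have := hp.two_le
    omega
end

section
/- Let G be the group presented by ⟨x, y ∣ x² = y³, (xy⁻¹)⁴ = x²⟩. (This is the fundamental group of 2-surgery on the right-handed trefoil: it is the quotient of the trefoil group ⟨x, y ∣ x² = y³⟩ by the surgery relation μ²λ = 1, where μ = xy⁻¹ is a meridian and λ = x²μ⁻⁶ is the longitude, and μ²λ = x²μ⁻⁴ since x² is central.) Then there exists a group homomorphism ρ from G to the multiplicative group of unit quaternions whose image is nonabelian; that is, G admits an irreducible SU(2)-representation. -/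
/-- The relators `x²y⁻³` and `(xy⁻¹)⁴x⁻²` of the presentation
`⟨x, y ∣ x² = y³, (xy⁻¹)⁴ = x²⟩` of the fundamental group of `2`-surgery on the
right-handed trefoil, with `x = FreeGroup.of 0` and `y = FreeGroup.of 1`. -/
def trefoilTwoSurgeryRels : Set (FreeGroup (Fin 2)) :=
  {FreeGroup.of 0 ^ 2 * (FreeGroup.of 1 ^ 3)⁻¹,
   (FreeGroup.of 0 * (FreeGroup.of 1)⁻¹) ^ 4 * (FreeGroup.of 0 ^ 2)⁻¹}

/-!
Send `x ↦ i` and `y ↦ 1/2 + (√2/2) i + (1/2) j`. A unit quaternion `u` is a root of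
`X² - 2 Re(u) X + 1`, so when `Re u = cos (π/n)` for `n = 2, 3, 4` it also kills `Xⁿ + 1`, i.e.
`uⁿ = -1`. Hence `x² = -1 = y³`, and `xy⁻¹ = x ȳ` has real part `√2/2`, so `(xy⁻¹)⁴ = -1 = x²`.
The image is nonabelian because `i` does not commute with the `j`-component of `y`.
-/

open Polynomial Metric

namespace Quaternion

variable {u : ℍ[ℝ]}

theorem aeval_X_sq_sub_two_re_mul_X_add_one (hu : normSq u = 1) :
    aeval u (X ^ 2 - C (2 * u.re) * X + 1) = 0 := by
  have h : ((2 * u.re : ℝ) : ℍ[ℝ]) * u = u ^ 2 + 1 := by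
    rw [← self_add_star', add_mul, star_mul_self, hu, coe_one, sq]
  rw [map_add, map_sub, map_mul, aeval_C, map_pow, aeval_X, map_one, algebraMap_def, h]
  abel

theorem aeval_eq_zero_of_quadratic_dvd (hu : normSq u = 1) {p : ℝ[X]}
    (hp : X ^ 2 - C (2 * u.re) * X + 1 ∣ p) : aeval u p = 0 :=
  aeval_eq_zero_of_dvd_aeval_eq_zero hp (aeval_X_sq_sub_two_re_mul_X_add_one hu)

theorem sq_eq_neg_one_of_re_eq_zero (hu : normSq u = 1) (hre : u.re = 0) : u ^ 2 = -1 := by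
  have := aeval_eq_zero_of_quadratic_dvd hu (p := X ^ 2 + 1) ⟨1, by simp [hre]⟩
  simpa [eq_neg_iff_add_eq_zero] using this

theorem pow_three_eq_neg_one_of_re_eq_half (hu : normSq u = 1) (hre : u.re = 1 / 2) :
    u ^ 3 = -1 := by
  have := aeval_eq_zero_of_quadratic_dvd hu (p := X ^ 3 + 1) ⟨X + 1, by rw [hre]; simp; ring⟩
  simpa [eq_neg_iff_add_eq_zero] using this

theorem pow_four_eq_neg_one_of_re_eq_sqrt_two_div_two (hu : normSq u = 1)
    (hre : u.re = √2 / 2) : u ^ 4 = -1 := by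
  have hC : C √2 * C √2 = (2 : ℝ[X]) := by
    rw [← C_mul, Real.mul_self_sqrt zero_le_two, C_ofNat]
  have := aeval_eq_zero_of_quadratic_dvd hu (p := X ^ 4 + 1)
    ⟨X ^ 2 + C √2 * X + 1, by
      rw [hre, mul_div_cancel₀ _ two_ne_zero]
      linear_combination X ^ 2 * hC⟩
  simpa [eq_neg_iff_add_eq_zero] using this

theorem mem_sphere_zero_one_iff_normSq_eq_one : u ∈ sphere (0 : ℍ[ℝ]) 1 ↔ normSq u = 1 := by
  rw [mem_sphere_zero_iff_norm, normSq_eq_norm_mul_self, ← sq,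
    pow_eq_one_iff_of_nonneg (norm_nonneg u) two_ne_zero]

end Quaternion

theorem trefoilTwoSurgery_exists_hom_not_commute {G : Type*} [Group G] {a b : G}
    (h₁ : a ^ 2 = b ^ 3) (h₂ : (a * b⁻¹) ^ 4 = a ^ 2) (hab : ¬Commute a b) :
    ∃ ρ : PresentedGroup trefoilTwoSurgeryRels →* G,
      ∃ g h : PresentedGroup trefoilTwoSurgeryRels, ρ g * ρ h ≠ ρ h * ρ g := by
  have hrels : ∀ r ∈ trefoilTwoSurgeryRels, FreeGroup.lift ![a, b] r = 1 := by
    rintro r (rfl | rfl) <;> simp [h₁, h₂]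
  refine ⟨PresentedGroup.toGroup hrels, .of 0, .of 1, fun h ↦ hab ((commute_iff_eq a b).2 ?_)⟩
  simpa [PresentedGroup.toGroup.of] using h

open Quaternion in
theorem exists_unit_quaternions_trefoilTwoSurgery_not_commute :
    ∃ a b : sphere (0 : ℍ[ℝ]) 1, a ^ 2 = b ^ 3 ∧ (a * b⁻¹) ^ 4 = a ^ 2 ∧ ¬Commute a b := by
  set x : ℍ[ℝ] := ⟨0, 1, 0, 0⟩
  set y : ℍ[ℝ] := ⟨1 / 2, √2 / 2, 1 / 2, 0⟩
  have hx : normSq x = 1 := by rw [normSq_def']; simp [x]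
  have hy : normSq y = 1 := by rw [normSq_def']; norm_num [y, div_pow]
  have hyinv : y⁻¹ = star y :=
    inv_eq_of_mul_eq_one_right (by rw [self_mul_star, hy, Quaternion.coe_one])
  have hx2 : x ^ 2 = -1 := sq_eq_neg_one_of_re_eq_zero hx rfl
  have hy3 : y ^ 3 = -1 := pow_three_eq_neg_one_of_re_eq_half hy rfl
  have hxy4 : (x * star y) ^ 4 = -1 :=
    pow_four_eq_neg_one_of_re_eq_sqrt_two_div_two (by simp [hx, hy])
      (by rw [re_mul, imI_star]; simp [x, y])
  refine ⟨⟨x, mem_sphere_zero_one_iff_normSq_eq_one.2 hx⟩,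
    ⟨y, mem_sphere_zero_one_iff_normSq_eq_one.2 hy⟩, ?_, ?_, ?_⟩
  · ext1; simp [hx2, hy3]
  · ext1; simp [hyinv, hxy4, hx2]
  · intro h
    have hk := congrArg (fun q : sphere (0 : ℍ[ℝ]) 1 ↦ (q : ℍ[ℝ]).imK) h.eq
    simp only [unitSphere.coe_mul, imK_mul] at hk
    norm_num [x, y] at hk

/-- The group `⟨x, y ∣ x² = y³, (xy⁻¹)⁴ = x²⟩` admits a homomorphism to
the group of unit quaternions (≅ SU(2)) with nonabelian image, i.e. an irreducible
SU(2)-representation. -/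
theorem trefoil_two_surgery_has_irreducible_su2_rep :
    ∃ ρ : PresentedGroup trefoilTwoSurgeryRels →* (Metric.sphere (0 : Quaternion ℝ) 1),
      ∃ g h : PresentedGroup trefoilTwoSurgeryRels, ρ g * ρ h ≠ ρ h * ρ g := by
  obtain ⟨a, b, h₁, h₂, hab⟩ := exists_unit_quaternions_trefoilTwoSurgery_not_commute
  exact trefoilTwoSurgery_exists_hom_not_commute h₁ h₂ hab
end

section
/- Let G be a group, let μ ∈ G be an element whose normal closure is all of G, and let λ be an element of the second derived subgroup of G. Let D∞ ⊆ ℍ be the binary dihedral group, consisting of all quaternions of the form a + bi with a² + b² = 1 together with all quaternions of the form cj + dk with c² + d² = 1. If ρ : G → ℍˣ is a group homomorphism whose image is contained in D∞ and is nonabelian, then ρ(μ)⁴ = 1 and ρ(λ) = 1; in particular ρ(μ⁴λ) = 1. -/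
/-!
Write `ℍ = ℂ ⊕ ℂj`. Products of two elements of `ℂj` lie in `ℂ`, so the elements `g` with
`ρ g ∈ ℂ` form a subgroup `N` of index at most two; it is normal and contains `G'`. As the image
is nonabelian, `N ≠ G`, so the normal generator `μ` lies outside `N`: then `ρ μ = cj + dk` with
`c² + d² = 1`, whence `(ρ μ)² = -1`. Finally `ρ(G') ⊆ ℂ` is abelian, so `ρ` kills `G'' = [G', G']`.
-/

/-- A quaternion lies in the binary dihedral group `D∞` if it is either of the form
`a + b·i` with `a² + b² = 1` or of the form `c·j + d·k` with `c² + d² = 1`. -/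
def IsBinaryDihedral (q : Quaternion ℝ) : Prop :=
  (q.imJ = 0 ∧ q.imK = 0 ∧ q.re ^ 2 + q.imI ^ 2 = 1) ∨
  (q.re = 0 ∧ q.imI = 0 ∧ q.imJ ^ 2 + q.imK ^ 2 = 1)

namespace Quaternion

section CommRing

variable {R : Type*} [CommRing R] {p q : ℍ[R]}

def IsComplex (q : ℍ[R]) : Prop := q.imJ = 0 ∧ q.imK = 0

/-- `c j + d k = (c + d i) j`. -/
def IsComplexMulJ (q : ℍ[R]) : Prop := q.re = 0 ∧ q.imI = 0

theorem IsComplex.mul (hp : IsComplex p) (hq : IsComplex q) : IsComplex (p * q) := by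
  obtain ⟨hp₁, hp₂⟩ := hp; obtain ⟨hq₁, hq₂⟩ := hq
  constructor <;> simp [hp₁, hp₂, hq₁, hq₂]

theorem IsComplexMulJ.mul (hp : IsComplexMulJ p) (hq : IsComplexMulJ q) :
    IsComplex (p * q) := by
  obtain ⟨hp₁, hp₂⟩ := hp; obtain ⟨hq₁, hq₂⟩ := hq
  constructor <;> simp [hp₁, hp₂, hq₁, hq₂]

theorem IsComplex.mul_comm (hp : IsComplex p) (hq : IsComplex q) : p * q = q * p := by
  obtain ⟨hp₁, hp₂⟩ := hp; obtain ⟨hq₁, hq₂⟩ := hq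
  ext <;> simp [hp₁, hp₂, hq₁, hq₂] <;> ring

theorem IsComplexMulJ.sq_eq_neg_one (hq : IsComplexMulJ q) (hn : q.imJ ^ 2 + q.imK ^ 2 = 1) :
    q ^ 2 = -1 := by
  obtain ⟨hq₁, hq₂⟩ := hq
  ext <;> simp [sq, hq₁, hq₂, mul_comm q.imJ]
  linear_combination -hn

end CommRing

section LinearOrderedField

variable (R : Type*) [Field R] [LinearOrder R] [IsStrictOrderedRing R]

def complexUnits : Subgroup ℍ[R]ˣ where
  carrier := {u | IsComplex (u : ℍ[R])}
  one_mem' := by simp [IsComplex]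
  mul_mem' hu hv := hu.mul hv
  inv_mem' {u} hu := by
    obtain ⟨hu₁, hu₂⟩ := hu
    constructor <;> simp [inv_def, hu₁, hu₂]

variable {R}

theorem mem_complexUnits {u : ℍ[R]ˣ} : u ∈ complexUnits R ↔ IsComplex (u : ℍ[R]) := Iff.rfl

theorem complexUnits_mul_comm {u v : ℍ[R]ˣ} (hu : u ∈ complexUnits R)
    (hv : v ∈ complexUnits R) : u * v = v * u :=
  Units.ext (IsComplex.mul_comm hu hv)

end LinearOrderedField

end Quaternion

open Quaternion

theorem IsBinaryDihedral.isComplex_or_isComplexMulJ {q : ℍ[ℝ]} (hq : IsBinaryDihedral q) :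
    IsComplex q ∨ IsComplexMulJ q :=
  hq.imp (fun h ↦ ⟨h.1, h.2.1⟩) (fun h ↦ ⟨h.1, h.2.1⟩)

theorem IsBinaryDihedral.sq_eq_neg_one_of_not_isComplex {q : ℍ[ℝ]} (hq : IsBinaryDihedral q)
    (hc : ¬ IsComplex q) : q ^ 2 = -1 := by
  rcases hq with h | h
  · exact absurd ⟨h.1, h.2.1⟩ hc
  · exact IsComplexMulJ.sq_eq_neg_one ⟨h.1, h.2.1⟩ h.2.2

namespace Subgroup

variable {G : Type*} [Group G] {H : Subgroup G}

theorem mul_mem_iff_of_forall_notMem_mul_mem (hH : ∀ a ∉ H, ∀ b ∉ H, a * b ∈ H) {a b : G} :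
    a * b ∈ H ↔ (a ∈ H ↔ b ∈ H) := by
  by_cases ha : a ∈ H <;> by_cases hb : b ∈ H
  · simp [ha, hb, mul_mem ha hb]
  · simp [ha, hb, mul_mem_cancel_left ha]
  · simp [ha, hb, mul_mem_cancel_right hb]
  · simp [ha, hb, hH a ha b hb]

theorem normal_of_forall_notMem_mul_mem (hH : ∀ a ∉ H, ∀ b ∉ H, a * b ∈ H) : H.Normal where
  conj_mem n hn g := by
    simp_rw [mul_mem_iff_of_forall_notMem_mul_mem hH, hn, iff_true, inv_mem_iff]

theorem commutator_le_of_forall_notMem_mul_mem (hH : ∀ a ∉ H, ∀ b ∉ H, a * b ∈ H) :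
    _root_.commutator G ≤ H := by
  rw [_root_.commutator_def, commutator_le]
  intro g _ h _
  simp only [commutatorElement_def, mul_mem_iff_of_forall_notMem_mul_mem hH, inv_mem_iff]
  tauto

theorem commutator_le_ker_of_map_mul_comm {M : Type*} [Group M] (f : G →* M) (K : Subgroup G)
    (hK : ∀ x ∈ K, ∀ y ∈ K, f x * f y = f y * f x) : ⁅K, K⁆ ≤ f.ker := by
  rw [commutator_le]
  intro x hx y hy
  rw [MonoidHom.mem_ker, map_commutatorElement, commutatorElement_eq_one_iff_mul_comm]
  exact hK x hx y hy

end Subgroup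

/-- If `μ ∈ G` normally generates `G`, `λ` lies in the second derived
subgroup of `G`, and `ρ : G → ℍˣ` is a homomorphism with nonabelian image contained in the
binary dihedral group `D∞`, then `ρ(μ)⁴ = 1` and `ρ(λ) = 1`; in particular `ρ(μ⁴λ) = 1`. -/
theorem binary_dihedral_rep_kills_four_surgery_relator
    (G : Type*) [Group G] (μ lam : G)
    (hμ : Subgroup.normalClosure ({μ} : Set G) = ⊤)
    (hlam : lam ∈ derivedSeries G 2)
    (ρ : G →* (Quaternion ℝ)ˣ)
    (hD : ∀ g : G, IsBinaryDihedral ((ρ g : (Quaternion ℝ)ˣ) : Quaternion ℝ))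
    (hnonab : ∃ g h : G, ρ g * ρ h ≠ ρ h * ρ g) :
    ρ μ ^ 4 = 1 ∧ ρ lam = 1 ∧ ρ (μ ^ 4 * lam) = 1 := by
  set N := (complexUnits ℝ).comap ρ
  have hN : ∀ a ∉ N, ∀ b ∉ N, a * b ∈ N := fun a ha b hb ↦ by
    simpa [N, mem_complexUnits] using
      ((hD a).isComplex_or_isComplexMulJ.resolve_left ha).mul
        ((hD b).isComplex_or_isComplexMulJ.resolve_left hb)
  have hμN : μ ∉ N := by
    intro hμN
    have := Subgroup.normal_of_forall_notMem_mul_mem hN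
    have hNtop : N = ⊤ :=
      top_le_iff.mp (hμ ▸ Subgroup.normalClosure_le_normal (by simpa using hμN))
    obtain ⟨g, h, hgh⟩ := hnonab
    exact hgh (complexUnits_mul_comm ((N.eq_top_iff').mp hNtop g) ((N.eq_top_iff').mp hNtop h))
  have hμsq : ρ μ ^ 2 = -1 :=
    Units.ext (by simpa using (hD μ).sq_eq_neg_one_of_not_isComplex hμN)
  have hμ4 : ρ μ ^ 4 = 1 := by
    rw [show 4 = 2 * 2 from rfl, pow_mul, hμsq, neg_one_sq]
  have hG' : derivedSeries G 1 ≤ N :=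
    derivedSeries_one G ▸ Subgroup.commutator_le_of_forall_notMem_mul_mem hN
  have hlam1 : ρ lam = 1 := Subgroup.commutator_le_ker_of_map_mul_comm ρ _
    (fun x hx y hy ↦ complexUnits_mul_comm (hG' hx) (hG' hy)) hlam
  exact ⟨hμ4, hlam1, by rw [map_mul, map_pow, hμ4, hlam1, one_mul]⟩
end
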